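/- arXiv:math/9805118 — 8 statements merged into one kernel-verified Lean document; each statement's English description precedes it below -/
import Mathlib

section
/- The intersection V of all cones of a quasi-fan Δ is a linear subspace of N_ℝ, and it is a face of every cone of Δ. -/
/-!
Let `V` be the intersection of the cones of the quasi-fan. Inside a cone `σ`, `V` is cut out by
the sum of the supporting forms of the faces `σ ∩ τ`, so `V` is a face of every cone and hence
itself a cone of the fan. Every face of `V` then belongs to the fan and therefore contains `V`:
a linear form that is nonnegative on `V` vanishes on `V`. A finitely generated cone with this
property is its own lineality space `L`. Indeed, `L` is a face, so the convex hull of the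
generators outside `L` is a compact convex set missing the closed cone `L`; a separating form is
nonnegative on `L`, hence zero there, and negative on those generators, so its negative is
nonnegative on the cone without vanishing on it.
-/

open Module

/-- The convex cone generated by a finite set of vectors: all nonnegative
linear combinations. -/
def coneHull {V : Type*} [AddCommGroup V] [Module ℝ V] (S : Finset V) : Set V :=
  {x | ∃ c : V → ℝ, (∀ v, 0 ≤ c v) ∧ x = ∑ v ∈ S, c v • v}

/-- A rational convex polyhedral cone in `ℝⁿ`: generated by finitely many
lattice vectors. -/
def IsRatPolyCone {n : ℕ} (σ : Set (Fin n → ℝ)) : Prop :=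
  ∃ S : Finset (Fin n → ℤ), σ = coneHull (S.image fun z => fun i => (z i : ℝ))

/-- `F` is a face of the cone `σ`, cut out by a supporting linear form
(`σ` itself is a face, via the zero form). -/
def IsFace {V : Type*} [AddCommGroup V] [Module ℝ V] (F σ : Set V) : Prop :=
  F ⊆ σ ∧ ∃ u : Module.Dual ℝ V, (∀ x ∈ σ, 0 ≤ u x) ∧ F = {x ∈ σ | u x = 0}

/-- A quasi-fan in `ℤⁿ`: a finite nonempty set of rational convex polyhedral
cones, closed under taking faces, such that any two members intersect in a
common face. -/
def IsQuasiFan {n : ℕ} (Δ : Set (Set (Fin n → ℝ))) : Prop :=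
  Δ.Finite ∧ Δ.Nonempty ∧ (∀ σ ∈ Δ, IsRatPolyCone σ) ∧
    (∀ σ ∈ Δ, ∀ F, IsFace F σ → F ∈ Δ) ∧
    (∀ σ ∈ Δ, ∀ τ ∈ Δ, IsFace (σ ∩ τ) σ)

namespace PointedCone

section LinearOrderedField

variable {R E : Type*} [Field R] [LinearOrder R] [IsStrictOrderedRing R]
  [AddCommGroup E] [Module R E]

theorem disjoint_convexHull_lineal {C : PointedCone R E} {t : Set E} (htC : t ⊆ C)
    (htL : Disjoint t C.lineal) : Disjoint (convexHull R t) (C.lineal : Set E) := by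
  refine Set.disjoint_left.2 fun y hy hyL => ?_
  obtain ⟨ι, _, w, z, hw₀, hw₁, hzt, rfl⟩ := mem_convexHull_iff_exists_fintype.1 hy
  obtain ⟨i, -, hi⟩ := Finset.exists_lt_of_sum_lt (s := Finset.univ) (f := fun _ => (0 : R))
    (g := w) (by simp [hw₁])
  exact Set.disjoint_left.1 htL (hzt i)
    ((IsFaceOf.lineal C).mem_of_sum_smul_mem (fun j => htC (hzt j)) hw₀ hyL i hi)

theorem forall_mem_hull_nonneg {s : Set E} {f : E →ₗ[R] R} (hf : ∀ y ∈ s, 0 ≤ f y) :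
    ∀ y ∈ hull R s, 0 ≤ f y := fun _ hy =>
  (Submodule.span_le (p := (positive R R).comap f)).2 hf hy

end LinearOrderedField

variable {E : Type*} [NormedAddCommGroup E] [NormedSpace ℝ E] [FiniteDimensional ℝ E]
  {s : Set E}

theorem exists_dual_nonneg_pos_of_notMem_lineal (hs : s.Finite) {x : E} (hx : x ∈ s)
    (hxL : x ∉ (hull ℝ s).lineal) :
    ∃ f : Module.Dual ℝ E, (∀ y ∈ hull ℝ s, 0 ≤ f y) ∧ 0 < f x := by
  set L := (hull ℝ s).lineal
  let P : ProperCone ℝ E := ⟨L.restrictScalars _, L.closed_of_finiteDimensional⟩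
  have hK : Disjoint (convexHull ℝ (s \ L)) (P : Set E) :=
    disjoint_convexHull_lineal (Set.sdiff_subset.trans subset_hull) Set.disjoint_sdiff_left
  obtain ⟨f, hfL, hfK⟩ := P.hyperplane_separation (convex_convexHull ℝ _)
    (hs.sdiff.isCompact_convexHull (𝕜 := ℝ)) hK
  have hfs : ∀ y ∈ s, 0 ≤ -f y := by
    intro y hy
    by_cases hyL : y ∈ L
    · simpa using hfL (-y) (L.neg_mem hyL)
    · exact (neg_pos.2 (hfK y (subset_convexHull ℝ _ ⟨hy, hyL⟩))).le
  exact ⟨-f.toLinearMap, forall_mem_hull_nonneg hfs,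
    neg_pos.2 (hfK x (subset_convexHull ℝ _ ⟨hx, hxL⟩))⟩

theorem coe_lineal_hull_eq_of_forall_dual_nonneg (hs : s.Finite)
    (h : ∀ f : Module.Dual ℝ E, (∀ y ∈ hull ℝ s, 0 ≤ f y) → ∀ y ∈ hull ℝ s, f y = 0) :
    ((hull ℝ s).lineal : Set E) = hull ℝ s := by
  refine subset_antisymm (lineal_le _) fun y hy => ?_
  suffices hull ℝ s ≤ ofSubmodule (hull ℝ s).lineal from this hy
  refine Submodule.span_le.2 fun x hx => ?_
  by_contra hxL
  obtain ⟨f, hf, hfx⟩ := exists_dual_nonneg_pos_of_notMem_lineal hs hx hxL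
  exact hfx.ne' (h f hf x (subset_hull hx))

end PointedCone

section

variable {V : Type*} [AddCommGroup V] [Module ℝ V]

theorem coneHull_eq_hull (S : Finset V) :
    coneHull S = (PointedCone.hull ℝ (S : Set V) : Set V) := by
  ext x
  constructor
  · rintro ⟨c, hc, rfl⟩
    exact Submodule.sum_mem _ fun v hv =>
      (PointedCone.hull ℝ _).smul_mem (hc v) (PointedCone.subset_hull hv)
  · intro hx
    obtain ⟨c, hcS, hc, rfl⟩ := PointedCone.mem_hull_set.1 hx
    exact ⟨c, hc, Finsupp.sum_of_support_subset c (by exact_mod_cast hcS) _ (by simp)⟩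

theorem IsFace.refl (σ : Set V) : IsFace σ σ :=
  ⟨subset_rfl, 0, fun _ _ => le_rfl, by simp⟩

theorem IsFace.inter {F G σ : Set V} (hF : IsFace F σ) (hG : IsFace G σ) :
    IsFace (F ∩ G) σ := by
  obtain ⟨-, u, hu, rfl⟩ := hF
  obtain ⟨-, v, hv, rfl⟩ := hG
  refine ⟨fun x hx => hx.1.1, u + v, fun x hx => add_nonneg (hu x hx) (hv x hx), ?_⟩
  ext x
  simp only [Set.mem_inter_iff, Set.mem_ofPred_eq, LinearMap.add_apply]
  constructor
  · rintro ⟨⟨hx, hux⟩, -, hvx⟩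
    simp [hx, hux, hvx]
  · rintro ⟨hx, huv⟩
    have := (add_eq_zero_iff_of_nonneg (hu x hx) (hv x hx)).1 huv
    exact ⟨⟨hx, this.1⟩, hx, this.2⟩

theorem isFace_inter_biInter {ι : Type*} {s : Set ι} (hs : s.Finite) {σ : Set V}
    {F : ι → Set V} (hF : ∀ i ∈ s, IsFace (σ ∩ F i) σ) : IsFace (σ ∩ ⋂ i ∈ s, F i) σ := by
  induction s, hs using Set.Finite.induction_on with
  | empty => simpa using IsFace.refl σ
  | @insert a s _ _ ih =>
    have h := (hF a (s.mem_insert a)).inter (ih fun i hi => hF i (s.mem_insert_of_mem a hi))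
    convert h using 1
    ext x
    simp only [Set.mem_inter_iff, Set.biInter_insert]
    tauto

end

/-- The intersection of all cones of a quasi-fan is a linear subspace of `ℝⁿ`
and is a face of every cone of the quasi-fan. -/
theorem minimalCone_isSubspace_and_face {n : ℕ} (Δ : Set (Set (Fin n → ℝ)))
    (hΔ : IsQuasiFan Δ) :
    (∃ W : Submodule ℝ (Fin n → ℝ), (W : Set (Fin n → ℝ)) = ⋂ σ ∈ Δ, σ) ∧
    ∀ σ ∈ Δ, IsFace (⋂ τ ∈ Δ, τ) σ := by
  obtain ⟨hfin, ⟨σ₀, hσ₀⟩, hpoly, hface, hinter⟩ := hΔ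
  set V := ⋂ τ ∈ Δ, τ
  have hV_face : ∀ σ ∈ Δ, IsFace V σ := fun σ hσ => by
    convert isFace_inter_biInter hfin (hinter σ hσ) using 1
    exact (Set.inter_eq_right.2 (Set.biInter_subset_of_mem hσ)).symm
  have hVΔ : V ∈ Δ := hface σ₀ hσ₀ V (hV_face σ₀ hσ₀)
  have hV_nonneg_zero : ∀ u : Module.Dual ℝ (Fin n → ℝ),
      (∀ x ∈ V, 0 ≤ u x) → ∀ x ∈ V, u x = 0 := fun u hu x hx =>
    (Set.biInter_subset_of_mem (hface V hVΔ _ ⟨Set.sep_subset _ _, u, hu, rfl⟩) hx).2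
  obtain ⟨S, hS⟩ := hpoly V hVΔ
  rw [coneHull_eq_hull] at hS
  rw [hS] at hV_nonneg_zero
  exact ⟨⟨_, hS ▸ PointedCone.coe_lineal_hull_eq_of_forall_dual_nonneg
    (Finset.finite_toSet _) hV_nonneg_zero⟩, hV_face⟩
end

section
/- In ℝ³ with standard basis e₁, e₂, e₃, set v₁ = −e₁, v₂ = −e₂, v₃ = −e₃, v₁' = e₂ + e₃, v₂' = e₁ + e₃, v₃' = e₁ + e₂. Suppose u₁, u₂, u₃ are linear forms on ℝ³ satisfying: u₁ ≤ u₂ and u₁ ≤ u₃ on cone(v₁, v₃'); u₂ ≤ u₁ and u₂ ≤ u₃ on cone(v₂, v₁'); u₃ ≤ u₁ and u₃ ≤ u₂ on cone(v₃, v₂'). Then u₁(v₁) = u₂(v₁), u₁(v₁') = u₂(v₁'), u₁(v₃) = u₃(v₃), u₁(v₃') = u₃(v₃'), u₂(v₂) = u₃(v₂), and u₂(v₂') = u₃(v₂'). -/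
open Module

/-- The cone of nonnegative linear combinations of two vectors. -/
def cone2 {V : Type*} [AddCommGroup V] [Module ℝ V] (a b : V) : Set V :=
  {x | ∃ s t : ℝ, 0 ≤ s ∧ 0 ≤ t ∧ x = s • a + t • b}

/-- In the example of Oda's non-projective fan: if `u₁, u₂, u₃` are linear
forms on `ℝ³` with `u₁` minimal on `cone(v₁, v₃')`, `u₂` minimal on
`cone(v₂, v₁')` and `u₃` minimal on `cone(v₃, v₂')`, then the stated six
equalities hold. -/
theorem oda_example_equalities
    (u₁ u₂ u₃ : Dual ℝ (Fin 3 → ℝ))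
    (v₁ v₂ v₃ v₁' v₂' v₃' : Fin 3 → ℝ)
    (hv₁ : v₁ = ![-1, 0, 0]) (hv₂ : v₂ = ![0, -1, 0]) (hv₃ : v₃ = ![0, 0, -1])
    (hv₁' : v₁' = ![0, 1, 1]) (hv₂' : v₂' = ![1, 0, 1]) (hv₃' : v₃' = ![1, 1, 0])
    (h₁ : ∀ v ∈ cone2 v₁ v₃', u₁ v ≤ u₂ v ∧ u₁ v ≤ u₃ v)
    (h₂ : ∀ v ∈ cone2 v₂ v₁', u₂ v ≤ u₁ v ∧ u₂ v ≤ u₃ v)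
    (h₃ : ∀ v ∈ cone2 v₃ v₂', u₃ v ≤ u₁ v ∧ u₃ v ≤ u₂ v) :
    u₁ v₁ = u₂ v₁ ∧ u₁ v₁' = u₂ v₁' ∧
    u₁ v₃ = u₃ v₃ ∧ u₁ v₃' = u₃ v₃' ∧
    u₂ v₂ = u₃ v₂ ∧ u₂ v₂' = u₃ v₂' := by
  have ma : v₁ ∈ cone2 v₁ v₃' := ⟨1, 0, zero_le_one, le_refl 0, by simp⟩
  have mb : v₃' ∈ cone2 v₁ v₃' := ⟨0, 1, le_refl 0, zero_le_one, by simp⟩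
  have mc : v₂ ∈ cone2 v₂ v₁' := ⟨1, 0, zero_le_one, le_refl 0, by simp⟩
  have md : v₁' ∈ cone2 v₂ v₁' := ⟨0, 1, le_refl 0, zero_le_one, by simp⟩
  have me : v₃ ∈ cone2 v₃ v₂' := ⟨1, 0, zero_le_one, le_refl 0, by simp⟩
  have mf : v₂' ∈ cone2 v₃ v₂' := ⟨0, 1, le_refl 0, zero_le_one, by simp⟩
  have i1 : u₁ v₃' ≤ u₃ v₃' := (h₁ v₃' mb).2
  have i2 : u₂ v₁' ≤ u₁ v₁' := (h₂ v₁' md).1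
  have i3 : u₃ v₂' ≤ u₂ v₂' := (h₃ v₂' mf).2
  have i4 : u₁ v₁ ≤ u₂ v₁ := (h₁ v₁ ma).1
  have i5 : u₃ v₃ ≤ u₁ v₃ := (h₃ v₃ me).1
  have i6 : u₂ v₂ ≤ u₃ v₂ := (h₂ v₂ mc).2
  have hA : v₃' + v₁ = v₁' + v₃ := by
    subst hv₁ hv₃ hv₁' hv₃'; funext i; fin_cases i <;> norm_num
  have hB : v₁' + v₂ = v₂' + v₁ := by
    subst hv₁ hv₂ hv₁' hv₂'; funext i; fin_cases i <;> norm_num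
  have hC : v₂' + v₃ = v₃' + v₂ := by
    subst hv₂ hv₃ hv₂' hv₃'; funext i; fin_cases i <;> norm_num
  have e1 : u₁ v₃' + u₁ v₁ = u₁ v₁' + u₁ v₃ := by rw [← map_add, ← map_add, hA]
  have e2 : u₂ v₁' + u₂ v₂ = u₂ v₂' + u₂ v₁ := by rw [← map_add, ← map_add, hB]
  have e3 : u₃ v₂' + u₃ v₃ = u₃ v₃' + u₃ v₂ := by rw [← map_add, ← map_add, hC]
  refine ⟨by linarith, by linarith, by linarith, by linarith, by linarith, by linarith⟩
end

section
/- Under the hypotheses of the previous example (the fan Δ in ℝ³ with maximal cones cone(v₁, v₃'), cone(v₂, v₁'), cone(v₃, v₂')), every Δ-concave family (u₁, u₂, u₃) of linear forms extends to a Δ̃-concave family, where Δ̃ has maximal cones σ₁ = cone(v₁, v₃, v₁', v₃'), σ₂ = cone(v₁, v₂, v₁', v₂'), σ₃ = cone(v₂, v₃, v₂', v₃'): namely, u₁ ≤ u₂, u₃ on σ₁, u₂ ≤ u₁, u₃ on σ₂, and u₃ ≤ u₁, u₂ on σ₃. -/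
open Module

/-- The cone of nonnegative linear combinations of four vectors. -/
def cone4 {V : Type*} [AddCommGroup V] [Module ℝ V] (a b c d : V) : Set V :=
  {x | ∃ s t p q : ℝ, 0 ≤ s ∧ 0 ≤ t ∧ 0 ≤ p ∧ 0 ≤ q ∧
    x = s • a + t • b + p • c + q • d}

lemma mem_cone2_left {V : Type*} [AddCommGroup V] [Module ℝ V] (a b : V) :
    a ∈ cone2 a b := ⟨1, 0, zero_le_one, le_rfl, by module⟩

lemma mem_cone2_right {V : Type*} [AddCommGroup V] [Module ℝ V] (a b : V) :
    b ∈ cone2 a b := ⟨0, 1, le_rfl, zero_le_one, by module⟩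

/-- Every `Δ`-concave family `(u₁, u₂, u₃)` (with `uᵢ` minimal on the `i`-th
maximal cone of `Δ`) extends to a `Δ̃`-concave family, where `Δ̃` has maximal
cones `σ₁ = cone(v₁,v₃,v₁',v₃')`, `σ₂ = cone(v₁,v₂,v₁',v₂')`,
`σ₃ = cone(v₂,v₃,v₂',v₃')`. -/
theorem oda_concave_extension
    (u₁ u₂ u₃ : Dual ℝ (Fin 3 → ℝ))
    (v₁ v₂ v₃ v₁' v₂' v₃' : Fin 3 → ℝ)
    (hv₁ : v₁ = ![-1, 0, 0]) (hv₂ : v₂ = ![0, -1, 0]) (hv₃ : v₃ = ![0, 0, -1])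
    (hv₁' : v₁' = ![0, 1, 1]) (hv₂' : v₂' = ![1, 0, 1]) (hv₃' : v₃' = ![1, 1, 0])
    (h₁ : ∀ v ∈ cone2 v₁ v₃', u₁ v ≤ u₂ v ∧ u₁ v ≤ u₃ v)
    (h₂ : ∀ v ∈ cone2 v₂ v₁', u₂ v ≤ u₁ v ∧ u₂ v ≤ u₃ v)
    (h₃ : ∀ v ∈ cone2 v₃ v₂', u₃ v ≤ u₁ v ∧ u₃ v ≤ u₂ v) :
    (∀ v ∈ cone4 v₁ v₃ v₁' v₃', u₁ v ≤ u₂ v ∧ u₁ v ≤ u₃ v) ∧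
    (∀ v ∈ cone4 v₁ v₂ v₁' v₂', u₂ v ≤ u₁ v ∧ u₂ v ≤ u₃ v) ∧
    (∀ v ∈ cone4 v₂ v₃ v₂' v₃', u₃ v ≤ u₁ v ∧ u₃ v ≤ u₂ v) := by
  obtain ⟨h1a, h1b⟩ := h₁ v₁ (mem_cone2_left _ _)
  obtain ⟨h1c, h1d⟩ := h₁ v₃' (mem_cone2_right _ _)
  obtain ⟨h2a, h2b⟩ := h₂ v₂ (mem_cone2_left _ _)
  obtain ⟨h2c, h2d⟩ := h₂ v₁' (mem_cone2_right _ _)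
  obtain ⟨h3a, h3b⟩ := h₃ v₃ (mem_cone2_left _ _)
  obtain ⟨h3c, h3d⟩ := h₃ v₂' (mem_cone2_right _ _)
  subst hv₁ hv₂ hv₃ hv₁' hv₂' hv₃'
  have e1 : (![-1, 0, 0] : Fin 3 → ℝ) = -![1, 0, 0] := by
    ext i; fin_cases i <;> norm_num
  have e2 : (![0, -1, 0] : Fin 3 → ℝ) = -![0, 1, 0] := by
    ext i; fin_cases i <;> norm_num
  have e3 : (![0, 0, -1] : Fin 3 → ℝ) = -![0, 0, 1] := by
    ext i; fin_cases i <;> norm_num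
  have e4 : (![0, 1, 1] : Fin 3 → ℝ) = ![0, 1, 0] + ![0, 0, 1] := by
    ext i; fin_cases i <;> norm_num
  have e5 : (![1, 0, 1] : Fin 3 → ℝ) = ![1, 0, 0] + ![0, 0, 1] := by
    ext i; fin_cases i <;> norm_num
  have e6 : (![1, 1, 0] : Fin 3 → ℝ) = ![1, 0, 0] + ![0, 1, 0] := by
    ext i; fin_cases i <;> norm_num
  simp only [e1, e2, e3, e4, e5, e6, map_neg, map_add] at h1a h1b h1c h1d h2a h2b h2c h2d h3a h3b h3c h3d
  -- the twelve additional generator inequalities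
  have n1 : u₁ ![0, 0, -1] ≤ u₂ ![0, 0, -1] := by
    simp only [e3, map_neg]; linarith
  have n2 : u₁ ![0, 1, 1] ≤ u₂ ![0, 1, 1] := by
    simp only [e4, map_add]; linarith
  have n3 : u₁ ![0, 0, -1] ≤ u₃ ![0, 0, -1] := by
    simp only [e3, map_neg]; linarith
  have n4 : u₁ ![0, 1, 1] ≤ u₃ ![0, 1, 1] := by
    simp only [e4, map_add]; linarith
  have n5 : u₂ ![-1, 0, 0] ≤ u₁ ![-1, 0, 0] := by
    simp only [e1, map_neg]; linarith
  have n6 : u₂ ![1, 0, 1] ≤ u₁ ![1, 0, 1] := by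
    simp only [e5, map_add]; linarith
  have n7 : u₂ ![-1, 0, 0] ≤ u₃ ![-1, 0, 0] := by
    simp only [e1, map_neg]; linarith
  have n8 : u₂ ![1, 0, 1] ≤ u₃ ![1, 0, 1] := by
    simp only [e5, map_add]; linarith
  have n9 : u₃ ![0, -1, 0] ≤ u₁ ![0, -1, 0] := by
    simp only [e2, map_neg]; linarith
  have n10 : u₃ ![1, 1, 0] ≤ u₁ ![1, 1, 0] := by
    simp only [e6, map_add]; linarith
  have n11 : u₃ ![0, -1, 0] ≤ u₂ ![0, -1, 0] := by
    simp only [e2, map_neg]; linarith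
  have n12 : u₃ ![1, 1, 0] ≤ u₂ ![1, 1, 0] := by
    simp only [e6, map_add]; linarith
  -- original generator inequalities, back in vector form
  have g1a : u₁ ![-1, 0, 0] ≤ u₂ ![-1, 0, 0] := by simp only [e1, map_neg]; linarith
  have g1b : u₁ ![-1, 0, 0] ≤ u₃ ![-1, 0, 0] := by simp only [e1, map_neg]; linarith
  have g1c : u₁ ![1, 1, 0] ≤ u₂ ![1, 1, 0] := by simp only [e6, map_add]; linarith
  have g1d : u₁ ![1, 1, 0] ≤ u₃ ![1, 1, 0] := by simp only [e6, map_add]; linarith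
  have g2a : u₂ ![0, -1, 0] ≤ u₁ ![0, -1, 0] := by simp only [e2, map_neg]; linarith
  have g2b : u₂ ![0, -1, 0] ≤ u₃ ![0, -1, 0] := by simp only [e2, map_neg]; linarith
  have g2c : u₂ ![0, 1, 1] ≤ u₁ ![0, 1, 1] := by simp only [e4, map_add]; linarith
  have g2d : u₂ ![0, 1, 1] ≤ u₃ ![0, 1, 1] := by simp only [e4, map_add]; linarith
  have g3a : u₃ ![0, 0, -1] ≤ u₁ ![0, 0, -1] := by simp only [e3, map_neg]; linarith
  have g3b : u₃ ![0, 0, -1] ≤ u₂ ![0, 0, -1] := by simp only [e3, map_neg]; linarith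
  have g3c : u₃ ![1, 0, 1] ≤ u₁ ![1, 0, 1] := by simp only [e5, map_add]; linarith
  have g3d : u₃ ![1, 0, 1] ≤ u₂ ![1, 0, 1] := by simp only [e5, map_add]; linarith
  refine ⟨fun v hv => ?_, fun v hv => ?_, fun v hv => ?_⟩ <;>
    obtain ⟨s, t, p, q, hs, ht, hp, hq, rfl⟩ := hv <;>
    simp only [map_add, map_smul, smul_eq_mul] <;>
    constructor <;>
    · gcongr <;> assumption
end

section
/- Let S₁ : ℤ⁴ → ℤ³ be the linear map with S₁(e₁) = e₁, S₁(e₂) = e₂, S₁(e₃) = e₃, S₁(e₄) = e₁ + e₂. Let |Δ| = cone(e₁, e₂) ∪ cone(e₃, e₄) ⊆ ℝ⁴ and τ = cone(e₁, e₂, e₃) ⊆ ℝ³. Then S₁,ℝ(|Δ|) ⊆ τ, but the faces cone(e₁, e₃) and cone(e₂, e₃) of τ are not contained in S₁,ℝ(|Δ|); in particular S₁,ℝ(|Δ|) ≠ τ. -/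
/-- The cone of nonnegative linear combinations of three vectors. -/
def cone3 {V : Type*} [AddCommGroup V] [Module ℝ V] (a b c : V) : Set V :=
  {x | ∃ s t p : ℝ, 0 ≤ s ∧ 0 ≤ t ∧ 0 ≤ p ∧ x = s • a + t • b + p • c}

/-- The real extension of the lattice map `S₁ : ℤ⁴ → ℤ³` with
`S₁ e₁ = e₁, S₁ e₂ = e₂, S₁ e₃ = e₃, S₁ e₄ = e₁ + e₂`. -/
noncomputable def S₁ : (Fin 4 → ℝ) →ₗ[ℝ] (Fin 3 → ℝ) :=
  Matrix.mulVecLin !![1, 0, 0, 1; 0, 1, 0, 1; 0, 0, 1, 0]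

lemma S₁_apply (x : Fin 4 → ℝ) : S₁ x = ![x 0 + x 3, x 1 + x 3, x 2] := by
  funext i
  fin_cases i <;>
    simp [S₁, Matrix.mulVecLin, Matrix.mulVec, dotProduct, Fin.sum_univ_four]

/-- For `|Δ| = cone(e₁,e₂) ∪ cone(e₃,e₄) ⊆ ℝ⁴` and `τ = cone(e₁,e₂,e₃) ⊆ ℝ³`,
the image `S₁(|Δ|)` is contained in `τ`, but the faces `cone(e₁,e₃)` and
`cone(e₂,e₃)` of `τ` are not contained in `S₁(|Δ|)`; in particular
`S₁(|Δ|) ≠ τ`. -/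
theorem toric_quotient_not_surjective :
    S₁ '' (cone2 ![1, 0, 0, 0] ![0, 1, 0, 0] ∪ cone2 ![0, 0, 1, 0] ![0, 0, 0, 1])
      ⊆ cone3 ![1, 0, 0] ![0, 1, 0] ![0, 0, 1] ∧
    ¬ (cone2 ![1, 0, 0] ![0, 0, 1] ⊆
        S₁ '' (cone2 ![1, 0, 0, 0] ![0, 1, 0, 0] ∪ cone2 ![0, 0, 1, 0] ![0, 0, 0, 1])) ∧
    ¬ (cone2 ![0, 1, 0] ![0, 0, 1] ⊆
        S₁ '' (cone2 ![1, 0, 0, 0] ![0, 1, 0, 0] ∪ cone2 ![0, 0, 1, 0] ![0, 0, 0, 1])) ∧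
    S₁ '' (cone2 ![1, 0, 0, 0] ![0, 1, 0, 0] ∪ cone2 ![0, 0, 1, 0] ![0, 0, 0, 1])
      ≠ cone3 ![1, 0, 0] ![0, 1, 0] ![0, 0, 1] := by
  have key1 : (![1, 0, 1] : Fin 3 → ℝ) ∉
      S₁ '' (cone2 ![1, 0, 0, 0] ![0, 1, 0, 0] ∪ cone2 ![0, 0, 1, 0] ![0, 0, 0, 1]) := by
    rintro ⟨x, hx | hx, hSx⟩ <;>
    · obtain ⟨s, t, hs, ht, rfl⟩ := hx
      rw [S₁_apply] at hSx
      have h0 := congrFun hSx 0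
      have h1 := congrFun hSx 1
      have h2 := congrFun hSx 2
      simp at h0 h1 h2
      try linarith
  have key2 : (![0, 1, 1] : Fin 3 → ℝ) ∉
      S₁ '' (cone2 ![1, 0, 0, 0] ![0, 1, 0, 0] ∪ cone2 ![0, 0, 1, 0] ![0, 0, 0, 1]) := by
    rintro ⟨x, hx | hx, hSx⟩ <;>
    · obtain ⟨s, t, hs, ht, rfl⟩ := hx
      rw [S₁_apply] at hSx
      have h0 := congrFun hSx 0
      have h1 := congrFun hSx 1
      have h2 := congrFun hSx 2
      simp at h0 h1 h2
      try linarith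
  refine ⟨?_, ?_, ?_, ?_⟩
  · rintro y ⟨x, hx | hx, rfl⟩
    · obtain ⟨s, t, hs, ht, rfl⟩ := hx
      rw [S₁_apply]
      exact ⟨s, t, 0, hs, ht, le_refl 0, by funext i; fin_cases i <;> simp⟩
    · obtain ⟨s, t, hs, ht, rfl⟩ := hx
      rw [S₁_apply]
      exact ⟨t, t, s, ht, ht, hs, by funext i; fin_cases i <;> simp⟩
  · intro h
    exact key1 (h ⟨1, 1, zero_le_one, zero_le_one, by funext i; fin_cases i <;> simp⟩)
  · intro h
    exact key2 (h ⟨1, 1, zero_le_one, zero_le_one, by funext i; fin_cases i <;> simp⟩)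
  · intro h
    exact key1 (h ▸ ⟨1, 0, 1, zero_le_one, le_refl 0, zero_le_one, by
      funext i; fin_cases i <;> simp⟩)
end

section
/- Let H = (ℂ*)^k act diagonally on ℂⁿ via characters, and let f₀, …, f_m ∈ ℂ[z₁, …, zₙ] be polynomials with no nontrivial common divisor such that every ratio f_i/f_j is an H-invariant rational function (f_i(h·x) f_j(x) = f_j(h·x) f_i(x) for all h, x). Then there exists a character χ : H → ℂ* such that f_i(h·x) = χ(h) f_i(x) for every i and all (h, x) ∈ H × ℂⁿ. -/
/-!
Twisting by `h ∈ H` is the ring automorphism `σ_h` of `ℂ[z]` scaling each `zᵢ` by `χᵢ(h)`, and the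
hypothesis says `σ_h(fᵢ) fⱼ = σ_h(fⱼ) fᵢ`. As the `fⱼ` have no common factor, a nonzero `f_{i₀}`
divides `σ_h(f_{i₀}) fⱼ` for every `j`, hence divides `σ_h(f_{i₀})`; the same for `σ_h⁻¹` makes the
two associate, so `σ_h` multiplies every `fᵢ` by one unit, a constant `c(h)`. A monomial `z^d` of
`f_{i₀}` is scaled by the character `∏ χᵢ^{dᵢ}`, which is therefore `c`.
-/

open MvPolynomial

/-- The character of the torus `H = (ℂ*)ᵏ` with exponent vector `c`. -/
noncomputable def torusChar {k : ℕ} (c : Fin k → ℤ) (h : Fin k → ℂˣ) : ℂ :=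
  ((∏ j, h j ^ c j : ℂˣ) : ℂ)

/-- The diagonal action of `H = (ℂ*)ᵏ` on `ℂⁿ` with weight matrix `A`. -/
noncomputable def torusAct {n k : ℕ} (A : Fin n → Fin k → ℤ)
    (h : Fin k → ℂˣ) (x : Fin n → ℂ) : Fin n → ℂ :=
  fun i => torusChar (A i) h * x i

section GCD

variable {α ι : Type*} [CommMonoidWithZero α] [GCDMonoid α]

theorem dvd_of_forall_dvd_mul {a b : α} {c : ι → α} (hc : ∀ d, (∀ i, d ∣ c i) → IsUnit d)
    (h : ∀ i, a ∣ b * c i) : a ∣ b := by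
  obtain ⟨a', b', ha, hb, hunit⟩ := extract_gcd a b
  by_cases hg : gcd a b = 0
  · rw [hb, hg, zero_mul]
    exact dvd_zero a
  have hrel : IsRelPrime a' b' := gcd_isUnit_iff_isRelPrime.mp hunit
  have ha' : IsUnit a' := hc a' fun i =>
    hrel.dvd_of_dvd_mul_left <| (mul_dvd_mul_iff_left hg).mp <| by
      simpa only [← ha, ← mul_assoc, ← hb] using h i
  calc a = gcd a b * a' := ha
    _ ∣ gcd a b * b' := mul_dvd_mul_left _ (ha'.dvd.trans (one_dvd b'))
    _ = b := hb.symm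

theorem dvd_map_of_map_mul_comm (σ : α →* α) {f : ι → α} (hf : ∀ d, (∀ i, d ∣ f i) → IsUnit d)
    (hσ : ∀ i j, σ (f i) * f j = σ (f j) * f i) (i : ι) : f i ∣ σ (f i) :=
  dvd_of_forall_dvd_mul hf fun j => ⟨σ (f j), by rw [hσ, mul_comm]⟩

theorem exists_unit_map_eq_mul_of_map_mul_comm (σ : α ≃* α) {f : ι → α}
    (hf : ∀ d, (∀ i, d ∣ f i) → IsUnit d) (hσ : ∀ i j, σ (f i) * f j = σ (f j) * f i) :
    ∃ u : αˣ, ∀ i, σ (f i) = u * f i := by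
  by_cases hzero : ∀ i, f i = 0
  · exact ⟨1, fun i => by rw [hzero i, map_zero, mul_zero]⟩
  push Not at hzero
  obtain ⟨i₀, hi₀⟩ := hzero
  have hσsymm : ∀ i j, σ.symm (f i) * f j = σ.symm (f j) * f i := fun i j => by
    simpa only [map_mul, σ.symm_apply_apply, mul_comm] using congrArg σ.symm (hσ j i)
  have hdvd : f i₀ ∣ σ (f i₀) := dvd_map_of_map_mul_comm σ.toMonoidHom hf hσ i₀
  have hdvd' : σ (f i₀) ∣ f i₀ := by
    simpa only [MulEquiv.coe_toMonoidHom, σ.apply_symm_apply] using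
      map_dvd σ (dvd_map_of_map_mul_comm σ.symm.toMonoidHom hf hσsymm i₀)
  obtain ⟨u, hu⟩ := associated_of_dvd_dvd hdvd hdvd'
  refine ⟨u, fun j => mul_right_cancel₀ hi₀ ?_⟩
  rw [hσ, ← hu]
  ac_rfl

end GCD

namespace MvPolynomial

variable {σ R : Type*} [CommSemiring R]

noncomputable def scaleVars (u : σ → Rˣ) : MvPolynomial σ R ≃ₐ[R] MvPolynomial σ R :=
  AlgEquiv.ofAlgHom (aeval fun i => C (u i : R) * X i) (aeval fun i => C (↑(u i)⁻¹ : R) * X i)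
    (algHom_ext fun i => by simp [← mul_assoc, ← C_mul])
    (algHom_ext fun i => by simp [← mul_assoc, ← C_mul])

variable (u : σ → Rˣ)

theorem eval_scaleVars (x : σ → R) (p : MvPolynomial σ R) :
    eval x (scaleVars u p) = eval (fun i => u i * x i) p := by
  induction p using MvPolynomial.induction_on with
  | C a => simp [scaleVars]
  | add p q hp hq => simp only [map_add, hp, hq]
  | mul_X p i hp => simp [scaleVars, ← hp]

theorem scaleVars_monomial (d : σ →₀ ℕ) (r : R) :
    scaleVars u (monomial d r) = monomial d ((d.prod fun i e => (u i : R) ^ e) * r) := by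
  rw [scaleVars, AlgEquiv.ofAlgHom_apply, aeval_monomial]
  simp only [mul_pow, ← C_pow, Finsupp.prod_mul]
  rw [← map_finsuppProd, monomial_eq, algebraMap_eq, C_mul]
  ring

theorem coeff_scaleVars (d : σ →₀ ℕ) (p : MvPolynomial σ R) :
    coeff d (scaleVars u p) = (d.prod fun i e => (u i : R) ^ e) * coeff d p := by
  classical
  induction p using MvPolynomial.induction_on' with
  | monomial e r =>
    rw [scaleVars_monomial, coeff_monomial, coeff_monomial]
    split_ifs with he
    · rw [he]
    · rw [mul_zero]
  | add p q hp hq => rw [map_add, coeff_add, coeff_add, hp, hq, mul_add]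

end MvPolynomial

section Torus

variable {n k : ℕ}

theorem torusChar_sum {ι : Type*} (s : Finset ι) (c : ι → Fin k → ℤ) (h : Fin k → ℂˣ) :
    torusChar (∑ i ∈ s, c i) h = ∏ i ∈ s, torusChar (c i) h := by
  classical
  induction s using Finset.induction_on with
  | empty => simp [torusChar]
  | insert a s ha ih =>
    rw [Finset.sum_insert ha, Finset.prod_insert ha, ← ih]
    simp only [torusChar, Pi.add_apply, zpow_add, Finset.prod_mul_distrib, Units.val_mul]

theorem torusChar_nsmul (e : ℕ) (c : Fin k → ℤ) (h : Fin k → ℂˣ) :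
    torusChar (e • c) h = torusChar c h ^ e := by
  simp only [torusChar, Pi.smul_apply, nsmul_eq_mul, mul_comm (e : ℤ), zpow_mul, zpow_natCast,
    Finset.prod_pow, Units.val_pow_eq_pow_val]

def monomialWeight (A : Fin n → Fin k → ℤ) (d : Fin n →₀ ℕ) : Fin k → ℤ :=
  ∑ i, d i • A i

theorem torusChar_monomialWeight (A : Fin n → Fin k → ℤ) (d : Fin n →₀ ℕ) (h : Fin k → ℂˣ) :
    torusChar (monomialWeight A d) h = d.prod fun i e => torusChar (A i) h ^ e := by
  simp only [monomialWeight, torusChar_sum, torusChar_nsmul, Finsupp.prod_pow]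

noncomputable def torusScale (A : Fin n → Fin k → ℤ) (h : Fin k → ℂˣ) :
    MvPolynomial (Fin n) ℂ ≃ₐ[ℂ] MvPolynomial (Fin n) ℂ :=
  scaleVars fun i => ∏ j, h j ^ A i j

theorem eval_torusScale (A : Fin n → Fin k → ℤ) (h : Fin k → ℂˣ) (x : Fin n → ℂ)
    (p : MvPolynomial (Fin n) ℂ) : eval x (torusScale A h p) = eval (torusAct A h x) p :=
  eval_scaleVars _ x p

theorem coeff_torusScale (A : Fin n → Fin k → ℤ) (h : Fin k → ℂˣ) (d : Fin n →₀ ℕ)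
    (p : MvPolynomial (Fin n) ℂ) :
    coeff d (torusScale A h p) = torusChar (monomialWeight A d) h * coeff d p := by
  rw [torusScale, coeff_scaleVars, torusChar_monomialWeight]
  rfl

end Torus

/-- If `f₀, …, f_m` have no nontrivial common divisor and all ratios `f_i/f_j`
are invariant under the diagonal torus action, then there is a character `χ`
such that `f_i(h·x) = χ(h) f_i(x)` for all `i`, `h` and `x`. -/
theorem common_character_of_semiinvariants
    {n k m : ℕ} (A : Fin n → Fin k → ℤ)
    (f : Fin (m + 1) → MvPolynomial (Fin n) ℂ)
    (hgcd : ∀ d : MvPolynomial (Fin n) ℂ, (∀ i, d ∣ f i) → IsUnit d)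
    (hratio : ∀ (i j : Fin (m + 1)) (h : Fin k → ℂˣ) (x : Fin n → ℂ),
      eval (torusAct A h x) (f i) * eval x (f j) =
        eval (torusAct A h x) (f j) * eval x (f i)) :
    ∃ c : Fin k → ℤ, ∀ (i : Fin (m + 1)) (h : Fin k → ℂˣ) (x : Fin n → ℂ),
      eval (torusAct A h x) (f i) = torusChar c h * eval x (f i) := by
  let : GCDMonoid (MvPolynomial (Fin n) ℂ) := UniqueFactorizationMonoid.toGCDMonoid _
  by_cases hzero : ∀ i, f i = 0
  · exact ⟨0, fun i h x => by simp only [hzero i, map_zero, mul_zero]⟩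
  push Not at hzero
  obtain ⟨i₀, hi₀⟩ := hzero
  obtain ⟨d₀, hd₀⟩ := ne_zero_iff.mp hi₀
  refine ⟨monomialWeight A d₀, fun i h x => ?_⟩
  have hcomm : ∀ i j, torusScale A h (f i) * f j = torusScale A h (f j) * f i := fun i j =>
    MvPolynomial.funext fun x => by simpa only [eval_mul, eval_torusScale] using hratio i j h x
  obtain ⟨u, hu⟩ : ∃ u : (MvPolynomial (Fin n) ℂ)ˣ, ∀ i, torusScale A h (f i) = u * f i :=
    exists_unit_map_eq_mul_of_map_mul_comm (torusScale A h).toMulEquiv hgcd hcomm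
  obtain ⟨c, -, hc⟩ := isUnit_iff_eq_C_of_isReduced.mp u.isUnit
  have hc_char : c = torusChar (monomialWeight A d₀) h := by
    have hcoeff := congrArg (coeff d₀) (hu i₀)
    rw [coeff_torusScale, hc, coeff_C_mul] at hcoeff
    exact (mul_right_cancel₀ hd₀ hcoeff).symm
  rw [← eval_torusScale, hu i, hc, eval_mul, eval_C, hc_char]
end

section
/- Let Δ be a fan in a lattice N, and for each decomposable subset S of Δ^{(1)} suppose given a Δ-concave family 𝔘_S such that S is not contained in any maximal cone of the normal quasi-fan Σ_{𝔘_S}. Let 𝔘 be the sum of all these families. Then for every decomposable S ⊆ Δ^{(1)}, S is not contained in any maximal cone of Σ_𝔘; consequently, every subset of Δ^{(1)} contained in a maximal cone of Σ_𝔘 is indecomposable. -/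
/-- A finite family of linear forms is `Δ`-concave with respect to the set
`Δmax` of maximal cones: on each maximal cone some member is pointwise
minimal. -/
def IsConcaveFamily {V : Type} [AddCommGroup V] [Module ℝ V]
    (Δmax : Set (Set V)) {I : Type} (u : I → Module.Dual ℝ V) : Prop :=
  ∀ σ ∈ Δmax, ∃ i₀ : I, ∀ i : I, ∀ v ∈ σ, u i₀ v ≤ u i v

/-- A set `R` of rays is indecomposable if for every `Δ`-concave family `𝔘`
the union of the rays of `R` lies in a single maximal cone of the normal
quasi-fan of `conv 𝔘` (these maximal cones being the sets
`{v : u i (v) ≤ u j (v) for all j}`). -/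
def Indecomposable {V : Type} [AddCommGroup V] [Module ℝ V]
    (Δmax : Set (Set V)) (R : Set (Set V)) : Prop :=
  ∀ (I : Type), Finite I → ∀ u : I → Module.Dual ℝ V,
    IsConcaveFamily Δmax u →
      ∃ i : I, ⋃₀ R ⊆ {v : V | ∀ j : I, u i v ≤ u j v}

/-- Choosing for every decomposable set `S` of rays a `Δ`-concave family `u S`
witnessing decomposability and summing up all these families yields a family
`𝔘` (indexed by the functions `g` choosing one index for each decomposable
`S`) such that no decomposable set of rays lies in a maximal cone of `Σ_𝔘`;
consequently every set of rays contained in a maximal cone of `Σ_𝔘` is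
indecomposable. -/
theorem generic_concave_family
    {V : Type} [AddCommGroup V] [Module ℝ V]
    (Δmax Rays : Set (Set V)) (hRays : Rays.Finite)
    (𝒮 : Set (Set (Set V)))
    (h𝒮 : 𝒮 = {S | S ⊆ Rays ∧ ¬ Indecomposable Δmax S})
    [Fintype 𝒮]
    (I : 𝒮 → Type) [∀ S, Finite (I S)]
    (u : ∀ S : 𝒮, I S → Module.Dual ℝ V)
    (hconc : ∀ S : 𝒮, IsConcaveFamily Δmax (u S))
    (hwit : ∀ S : 𝒮, ¬ ∃ i : I S,
      ⋃₀ (S : Set (Set V)) ⊆ {v : V | ∀ j : I S, u S i v ≤ u S j v}) :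
    (∀ S : 𝒮, ¬ ∃ g : ∀ T : 𝒮, I T,
      ⋃₀ (S : Set (Set V)) ⊆
        {v : V | ∀ g' : ∀ T : 𝒮, I T,
          (∑ T : 𝒮, u T (g T)) v ≤ (∑ T : 𝒮, u T (g' T)) v}) ∧
    (∀ R : Set (Set V), R ⊆ Rays →
      (∃ g : ∀ T : 𝒮, I T,
        ⋃₀ R ⊆ {v : V | ∀ g' : ∀ T : 𝒮, I T,
          (∑ T : 𝒮, u T (g T)) v ≤ (∑ T : 𝒮, u T (g' T)) v}) →
      Indecomposable Δmax R) := by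
  classical
  have key : ∀ (S : 𝒮) (g : ∀ T : 𝒮, I T) (v : V),
      (∀ g' : ∀ T : 𝒮, I T,
        (∑ T : 𝒮, u T (g T)) v ≤ (∑ T : 𝒮, u T (g' T)) v) →
      ∀ j : I S, u S (g S) v ≤ u S j v := by
    intro S g v hv j
    have h := hv (Function.update g S j)
    simp only [LinearMap.sum_apply] at h
    rw [← Finset.add_sum_erase _ _ (Finset.mem_univ S),
        ← Finset.add_sum_erase _ _ (Finset.mem_univ S)] at h
    have heq : ∑ x ∈ Finset.univ.erase S, (u x) (Function.update g S j x) v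
        = ∑ x ∈ Finset.univ.erase S, u x (g x) v :=
      Finset.sum_congr rfl fun x hx => by
        rw [Function.update_of_ne (Finset.ne_of_mem_erase hx)]
    rw [heq, Function.update_self] at h
    linarith
  have h1 : ∀ S : 𝒮, ¬ ∃ g : ∀ T : 𝒮, I T,
      ⋃₀ (S : Set (Set V)) ⊆
        {v : V | ∀ g' : ∀ T : 𝒮, I T,
          (∑ T : 𝒮, u T (g T)) v ≤ (∑ T : 𝒮, u T (g' T)) v} := by
    intro S ⟨g, hsub⟩
    exact hwit S ⟨g S, fun v hv j => key S g v (hsub hv) j⟩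
  refine ⟨h1, fun R hR hg => ?_⟩
  by_contra hnot
  exact h1 ⟨R, h𝒮 ▸ ⟨hR, hnot⟩⟩ hg
end

section
/- Let Δ be a fan in ℤ³ obtained by taking cones over the faces of the cube with vertices (±1,±1,±1), but with the vertex (1,1,1) replaced by (1,2,3). Then every continuous function h : ℝ³ → ℝ that is linear on each maximal cone of Δ and satisfies h(ℤ³) ⊆ ℤ is globally linear (i.e., given by a single linear form). -/
/-!
If `h` is linear on the cone spanned by four vectors, the values of `h` at the generators satisfy
the linear relation among them. For the deformed cube, the relations of the five faces other than
the bottom one express the values of `h` at the vertices with `z = 1` through its values at the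
vertices with `z = -1`, and these are exactly the values of the linear form of the bottom face.
So `h` agrees with that form at all eight vertices, hence on each of the six cones, and these cones
cover `ℝ³`.
-/

open Module

/-- The maximal cones of Fulton's deformed-cube fan `Δ` in `ℝ³`: the cones
over the six faces of the cube with vertices `(±1,±1,±1)`, where the vertex
`(1,1,1)` has been moved to `(1,2,3)`. -/
def deformedCubeFan : Set (Set (Fin 3 → ℝ)) :=
  { cone4 ![1, 2, 3] ![-1, 1, 1] ![1, -1, 1] ![-1, -1, 1],
    cone4 ![1, 1, -1] ![-1, 1, -1] ![1, -1, -1] ![-1, -1, -1],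
    cone4 ![1, 2, 3] ![1, -1, 1] ![1, 1, -1] ![1, -1, -1],
    cone4 ![-1, 1, 1] ![-1, -1, 1] ![-1, 1, -1] ![-1, -1, -1],
    cone4 ![1, 2, 3] ![-1, 1, 1] ![1, 1, -1] ![-1, 1, -1],
    cone4 ![1, -1, 1] ![-1, -1, 1] ![1, -1, -1] ![-1, -1, -1] }

section Cone

variable {V : Type*} [AddCommGroup V] [Module ℝ V] {a b c d : V}

lemma mem_cone4₁ : a ∈ cone4 a b c d :=
  ⟨1, 0, 0, 0, zero_le_one, le_rfl, le_rfl, le_rfl, by simp⟩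

lemma mem_cone4₂ : b ∈ cone4 a b c d :=
  ⟨0, 1, 0, 0, le_rfl, zero_le_one, le_rfl, le_rfl, by simp⟩

lemma mem_cone4₃ : c ∈ cone4 a b c d :=
  ⟨0, 0, 1, 0, le_rfl, le_rfl, zero_le_one, le_rfl, by simp⟩

lemma mem_cone4₄ : d ∈ cone4 a b c d :=
  ⟨0, 0, 0, 1, le_rfl, le_rfl, le_rfl, zero_le_one, by simp⟩

lemma eqOn_cone4 {h : V → ℝ} {ℓ L : Dual ℝ V} (hℓ : Set.EqOn h ℓ (cone4 a b c d))
    (ha : h a = L a) (hb : h b = L b) (hc : h c = L c) (hd : h d = L d) :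
    Set.EqOn h L (cone4 a b c d) := by
  rintro x ⟨s, t, p, q, hs, ht, hp, hq, rfl⟩
  rw [hℓ ⟨s, t, p, q, hs, ht, hp, hq, rfl⟩]
  simp only [map_add, map_smul, smul_eq_mul]
  rw [← hℓ mem_cone4₁, ← hℓ mem_cone4₂, ← hℓ mem_cone4₃, ← hℓ mem_cone4₄, ha, hb, hc, hd]

end Cone

lemma linear_relation_of_eqOn {V : Type*} [AddCommGroup V] [Module ℝ V] {s : Set V}
    {h : V → ℝ} {ℓ : Dual ℝ V} (hℓ : Set.EqOn h ℓ s) {a b c d : V}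
    (ha : a ∈ s) (hb : b ∈ s) (hc : c ∈ s) (hd : d ∈ s) {α β γ δ : ℝ}
    (hrel : α • a + β • b = γ • c + δ • d) :
    α * h a + β * h b = γ * h c + δ * h d := by
  have := congrArg ℓ hrel
  simp only [map_add, map_smul, smul_eq_mul] at this
  rwa [hℓ ha, hℓ hb, hℓ hc, hℓ hd]

local notation "v₁" => (![1, 2, 3] : Fin 3 → ℝ)
local notation "v₂" => (![-1, 1, 1] : Fin 3 → ℝ)
local notation "v₃" => (![1, -1, 1] : Fin 3 → ℝ)
local notation "v₄" => (![-1, -1, 1] : Fin 3 → ℝ)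
local notation "v₅" => (![1, 1, -1] : Fin 3 → ℝ)
local notation "v₆" => (![-1, 1, -1] : Fin 3 → ℝ)
local notation "v₇" => (![1, -1, -1] : Fin 3 → ℝ)
local notation "v₈" => (![-1, -1, -1] : Fin 3 → ℝ)

section FaceCones

variable {x : Fin 3 → ℝ}

lemma mem_cone_zPos (h₁ : 0 ≤ x 0 + x 2) (h₂ : 0 ≤ x 1 + x 2) (h₃ : x 0 + 4 * x 1 ≤ 3 * x 2)
    (h₄ : 5 * x 0 + 2 * x 1 ≤ 3 * x 2) : x ∈ cone4 v₁ v₂ v₃ v₄ := by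
  rcases le_total 0 (x 0 + x 1) with h | h
  · refine ⟨(x 0 + x 1) / 3, (3 * x 2 - 5 * x 0 - 2 * x 1) / 6, (3 * x 2 - x 0 - 4 * x 1) / 6, 0,
      ?_, ?_, ?_, ?_, ?_⟩ <;> first | linarith | (ext i; fin_cases i <;> simp <;> ring)
  · refine ⟨0, (x 1 + x 2) / 2, (x 0 + x 2) / 2, -(x 0 + x 1) / 2,
      ?_, ?_, ?_, ?_, ?_⟩ <;> first | linarith | (ext i; fin_cases i <;> simp <;> ring)

lemma mem_cone_zNeg (h₁ : x 2 ≤ x 0) (h₂ : x 2 ≤ x 1) (h₃ : x 0 + x 2 ≤ 0) (h₄ : x 1 + x 2 ≤ 0) :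
    x ∈ cone4 v₅ v₆ v₇ v₈ := by
  rcases le_total (x 0) (x 1) with h | h
  · refine ⟨(x 0 - x 2) / 2, (x 1 - x 0) / 2, 0, -(x 1 + x 2) / 2,
      ?_, ?_, ?_, ?_, ?_⟩ <;> first | linarith | (ext i; fin_cases i <;> simp <;> ring)
  · refine ⟨(x 1 - x 2) / 2, 0, (x 0 - x 1) / 2, -(x 0 + x 2) / 2,
      ?_, ?_, ?_, ?_, ?_⟩ <;> first | linarith | (ext i; fin_cases i <;> simp <;> ring)

lemma mem_cone_xPos (h₁ : 0 ≤ x 0 + x 1) (h₂ : 0 ≤ x 0 + x 2) (h₃ : 4 * x 1 ≤ 5 * x 0 + x 2)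
    (h₄ : 3 * x 2 ≤ 5 * x 0 + 2 * x 1) : x ∈ cone4 v₁ v₃ v₅ v₇ := by
  rcases le_total 0 (x 1 + x 2) with h | h
  · refine ⟨(x 1 + x 2) / 5, (5 * x 0 - 4 * x 1 + x 2) / 10, (5 * x 0 + 2 * x 1 - 3 * x 2) / 10, 0,
      ?_, ?_, ?_, ?_, ?_⟩ <;> first | linarith | (ext i; fin_cases i <;> simp <;> ring)
  · refine ⟨0, (x 0 + x 2) / 2, (x 0 + x 1) / 2, -(x 1 + x 2) / 2,
      ?_, ?_, ?_, ?_, ?_⟩ <;> first | linarith | (ext i; fin_cases i <;> simp <;> ring)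

lemma mem_cone_xNeg (h₁ : x 0 ≤ x 1) (h₂ : x 0 ≤ x 2) (h₃ : x 0 + x 1 ≤ 0) (h₄ : x 0 + x 2 ≤ 0) :
    x ∈ cone4 v₂ v₄ v₆ v₈ := by
  rcases le_total (x 1) (x 2) with h | h
  · refine ⟨(x 1 - x 0) / 2, (x 2 - x 1) / 2, 0, -(x 0 + x 2) / 2,
      ?_, ?_, ?_, ?_, ?_⟩ <;> first | linarith | (ext i; fin_cases i <;> simp <;> ring)
  · refine ⟨(x 2 - x 0) / 2, 0, (x 1 - x 2) / 2, -(x 0 + x 1) / 2,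
      ?_, ?_, ?_, ?_, ?_⟩ <;> first | linarith | (ext i; fin_cases i <;> simp <;> ring)

lemma mem_cone_yPos (h₁ : 0 ≤ x 0 + x 1) (h₂ : 0 ≤ x 1 + x 2) (h₃ : 5 * x 0 + x 2 ≤ 4 * x 1)
    (h₄ : 3 * x 2 ≤ x 0 + 4 * x 1) : x ∈ cone4 v₁ v₂ v₅ v₆ := by
  rcases le_total 0 (x 0 + x 2) with h | h
  · refine ⟨(x 0 + x 2) / 4, (4 * x 1 - 5 * x 0 - x 2) / 8, (x 0 + 4 * x 1 - 3 * x 2) / 8, 0,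
      ?_, ?_, ?_, ?_, ?_⟩ <;> first | linarith | (ext i; fin_cases i <;> simp <;> ring)
  · refine ⟨0, (x 1 + x 2) / 2, (x 0 + x 1) / 2, -(x 0 + x 2) / 2,
      ?_, ?_, ?_, ?_, ?_⟩ <;> first | linarith | (ext i; fin_cases i <;> simp <;> ring)

lemma mem_cone_yNeg (h₁ : x 1 ≤ x 0) (h₂ : x 1 ≤ x 2) (h₃ : x 0 + x 1 ≤ 0) (h₄ : x 1 + x 2 ≤ 0) :
    x ∈ cone4 v₃ v₄ v₇ v₈ := by
  rcases le_total (x 0) (x 2) with h | h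
  · refine ⟨(x 0 - x 1) / 2, (x 2 - x 0) / 2, 0, -(x 1 + x 2) / 2,
      ?_, ?_, ?_, ?_, ?_⟩ <;> first | linarith | (ext i; fin_cases i <;> simp <;> ring)
  · refine ⟨(x 2 - x 1) / 2, 0, (x 0 - x 2) / 2, -(x 0 + x 1) / 2,
      ?_, ?_, ?_, ?_, ?_⟩ <;> first | linarith | (ext i; fin_cases i <;> simp <;> ring)

end FaceCones

def deformedCubeVertices : Set (Fin 3 → ℝ) := {v₁, v₂, v₃, v₄, v₅, v₆, v₇, v₈}

theorem exists_mem_deformedCubeFan (x : Fin 3 → ℝ) : ∃ σ ∈ deformedCubeFan, x ∈ σ := by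
  suffices x ∈ cone4 v₁ v₂ v₃ v₄ ∨ x ∈ cone4 v₅ v₆ v₇ v₈ ∨ x ∈ cone4 v₁ v₃ v₅ v₇ ∨
      x ∈ cone4 v₂ v₄ v₆ v₈ ∨ x ∈ cone4 v₁ v₂ v₅ v₆ ∨ x ∈ cone4 v₃ v₄ v₇ v₈ by
    simpa [deformedCubeFan] using this
  -- The signs of the pairwise sums decide the face, except when all of them are nonnegative
  -- (the three faces through `v₁`) or all are nonpositive (then the least coordinate decides).
  rcases le_total 0 (x 0 + x 1) with hu | hu <;> rcases le_total 0 (x 0 + x 2) with hv | hv <;>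
    rcases le_total 0 (x 1 + x 2) with hw | hw
  · rcases le_total (4 * x 1) (5 * x 0 + x 2) with hFR | hFR
    · rcases le_total (5 * x 0 + 2 * x 1) (3 * x 2) with hTF | hTF
      · exact .inl (mem_cone_zPos hv hw (by linarith) hTF)
      · exact .inr <| .inr <| .inl (mem_cone_xPos hu hv hFR hTF)
    · rcases le_total (x 0 + 4 * x 1) (3 * x 2) with hTR | hTR
      · exact .inl (mem_cone_zPos hv hw hTR (by linarith))
      · exact .inr <| .inr <| .inr <| .inr <| .inl (mem_cone_yPos hu hw hFR hTR)
  · exact .inr <| .inr <| .inl (mem_cone_xPos hu hv (by linarith) (by linarith))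
  · exact .inr <| .inr <| .inr <| .inr <| .inl (mem_cone_yPos hu hw (by linarith) (by linarith))
  · exact .inr <| .inl (mem_cone_zNeg (by linarith) (by linarith) hv hw)
  · exact .inl (mem_cone_zPos hv hw (by linarith) (by linarith))
  · exact .inr <| .inr <| .inr <| .inr <| .inr (mem_cone_yNeg (by linarith) (by linarith) hu hw)
  · exact .inr <| .inr <| .inr <| .inl (mem_cone_xNeg (by linarith) (by linarith) hu hv)
  · rcases le_total (x 0) (x 1) with h01 | h01
    · rcases le_total (x 0) (x 2) with h02 | h02
      · exact .inr <| .inr <| .inr <| .inl (mem_cone_xNeg h01 h02 hu hv)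
      · exact .inr <| .inl (mem_cone_zNeg h02 (h02.trans h01) hv hw)
    · rcases le_total (x 1) (x 2) with h12 | h12
      · exact .inr <| .inr <| .inr <| .inr <| .inr (mem_cone_yNeg h01 h12 hu hw)
      · exact .inr <| .inl (mem_cone_zNeg (h12.trans h01) h12 hv hw)

section PiecewiseLinear

variable {h : (Fin 3 → ℝ) → ℝ}

lemma exists_dual_eqOn_deformedCubeVertices
    (hlin : ∀ σ ∈ deformedCubeFan, ∃ ℓ : Dual ℝ (Fin 3 → ℝ), ∀ x ∈ σ, h x = ℓ x) :
    ∃ L : Dual ℝ (Fin 3 → ℝ), Set.EqOn h L deformedCubeVertices := by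
  obtain ⟨ℓT, hT⟩ := hlin (cone4 v₁ v₂ v₃ v₄) (by simp [deformedCubeFan])
  obtain ⟨ℓB, hB⟩ := hlin (cone4 v₅ v₆ v₇ v₈) (by simp [deformedCubeFan])
  obtain ⟨ℓF, hF⟩ := hlin (cone4 v₁ v₃ v₅ v₇) (by simp [deformedCubeFan])
  obtain ⟨ℓK, hK⟩ := hlin (cone4 v₂ v₄ v₆ v₈) (by simp [deformedCubeFan])
  obtain ⟨ℓR, hR⟩ := hlin (cone4 v₁ v₂ v₅ v₆) (by simp [deformedCubeFan])
  obtain ⟨ℓL, hL⟩ := hlin (cone4 v₃ v₄ v₇ v₈) (by simp [deformedCubeFan])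
  have relT := linear_relation_of_eqOn hT mem_cone4₁ mem_cone4₄ mem_cone4₂ mem_cone4₃
    (show (2 : ℝ) • v₁ + (3 : ℝ) • v₄ = (5 : ℝ) • v₂ + (4 : ℝ) • v₃ by norm_num)
  have relF := linear_relation_of_eqOn hF mem_cone4₁ mem_cone4₄ mem_cone4₂ mem_cone4₃
    (show (2 : ℝ) • v₁ + (5 : ℝ) • v₇ = (4 : ℝ) • v₃ + (3 : ℝ) • v₅ by norm_num)
  have relR := linear_relation_of_eqOn hR mem_cone4₁ mem_cone4₄ mem_cone4₂ mem_cone4₃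
    (show (2 : ℝ) • v₁ + (4 : ℝ) • v₆ = (5 : ℝ) • v₂ + (3 : ℝ) • v₅ by norm_num)
  have relK := linear_relation_of_eqOn hK mem_cone4₁ mem_cone4₄ mem_cone4₂ mem_cone4₃
    (show (1 : ℝ) • v₂ + (1 : ℝ) • v₈ = (1 : ℝ) • v₄ + (1 : ℝ) • v₆ by norm_num)
  have relL := linear_relation_of_eqOn hL mem_cone4₁ mem_cone4₄ mem_cone4₂ mem_cone4₃
    (show (1 : ℝ) • v₃ + (1 : ℝ) • v₈ = (1 : ℝ) • v₄ + (1 : ℝ) • v₇ by norm_num)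
  have ℓB₁ : ℓB ((2 : ℝ) • v₁) = ℓB ((3 : ℝ) • v₅ - (4 : ℝ) • v₆ - (5 : ℝ) • v₇) := by
    congr 1; norm_num
  simp only [map_smul, map_sub, smul_eq_mul] at ℓB₁
  have ℓB₂ : ℓB v₂ = -ℓB v₇ := by rw [← map_neg]; norm_num
  have ℓB₃ : ℓB v₃ = -ℓB v₆ := by rw [← map_neg]; norm_num
  have ℓB₄ : ℓB v₄ = -ℓB v₅ := by rw [← map_neg]; norm_num
  have h₅ := hB _ mem_cone4₁
  have h₆ := hB _ mem_cone4₂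
  have h₇ := hB _ mem_cone4₃
  have h₈ := hB _ mem_cone4₄
  refine ⟨ℓB, fun v hv => ?_⟩
  simp only [deformedCubeVertices, Set.mem_insert_iff, Set.mem_singleton_iff] at hv
  rcases hv with rfl | rfl | rfl | rfl | rfl | rfl | rfl | rfl <;> linarith

lemma eqOn_of_mem_deformedCubeFan
    (hlin : ∀ σ ∈ deformedCubeFan, ∃ ℓ : Dual ℝ (Fin 3 → ℝ), ∀ x ∈ σ, h x = ℓ x)
    {L : Dual ℝ (Fin 3 → ℝ)} (hL : Set.EqOn h L deformedCubeVertices)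
    {σ : Set (Fin 3 → ℝ)} (hσ : σ ∈ deformedCubeFan) : Set.EqOn h L σ := by
  obtain ⟨ℓ, hℓ⟩ := hlin σ hσ
  rcases hσ with rfl | rfl | rfl | rfl | rfl | rfl <;>
    exact eqOn_cone4 hℓ (hL (by simp [deformedCubeVertices])) (hL (by simp [deformedCubeVertices]))
      (hL (by simp [deformedCubeVertices])) (hL (by simp [deformedCubeVertices]))

end PiecewiseLinear

theorem support_functions_of_deformed_cube_are_linear_general
    (h : (Fin 3 → ℝ) → ℝ)
    (hlin : ∀ σ ∈ deformedCubeFan,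
      ∃ ℓ : Dual ℝ (Fin 3 → ℝ), ∀ x ∈ σ, h x = ℓ x) :
    ∃ ℓ : Dual ℝ (Fin 3 → ℝ), ∀ x, h x = ℓ x := by
  obtain ⟨L, hL⟩ := exists_dual_eqOn_deformedCubeVertices hlin
  refine ⟨L, fun x => ?_⟩
  obtain ⟨σ, hσ, hx⟩ := exists_mem_deformedCubeFan x
  exact eqOn_of_mem_deformedCubeFan hlin hL hσ hx

/-- Every continuous function on `ℝ³` that is linear on each maximal cone of
the deformed-cube fan and takes integer values on `ℤ³` is globally linear. -/
theorem support_functions_of_deformed_cube_are_linear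
    (h : (Fin 3 → ℝ) → ℝ) (hcont : Continuous h)
    (hlin : ∀ σ ∈ deformedCubeFan,
      ∃ ℓ : Dual ℝ (Fin 3 → ℝ), ∀ x ∈ σ, h x = ℓ x)
    (hint : ∀ z : Fin 3 → ℤ, ∃ m : ℤ, h (fun i => (z i : ℝ)) = (m : ℝ)) :
    ∃ ℓ : Dual ℝ (Fin 3 → ℝ), ∀ x, h x = ℓ x :=
  support_functions_of_deformed_cube_are_linear_general h hlin
end

section
/- Let Δ be the fan in ℝ⁴ with maximal cones σ₁ = cone(e₁, e₂) and σ₂ = cone(e₃, e₄), and let S₁ : ℤ⁴ → ℤ³ be given by S₁(e₁) = e₁, S₁(e₂) = e₂, S₁(e₃) = e₃, S₁(e₄) = e₁ + e₂. Then S₁ is a map of fans from Δ to the fan of faces of τ = cone(e₁, e₂, e₃) in ℝ³ (each σ_i maps into τ), the images S₁,ℝ(e₁), …, S₁,ℝ(e₄) generate τ as a cone, but S₁,ℝ(σ₁) ∪ S₁,ℝ(σ₂) ≠ τ. -/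
lemma hS (v : Fin 4 → ℝ) : S₁ v = ![v 0 + v 3, v 1 + v 3, v 2] := by
  funext i
  fin_cases i <;>
    simp [S₁, Matrix.mulVec, dotProduct, Fin.sum_univ_four]

lemma vec3_ext (x : Fin 3 → ℝ) : x = ![x 0, x 1, x 2] := by
  funext i; fin_cases i <;> rfl

/-- For the fan `Δ` in `ℝ⁴` with maximal cones `σ₁ = cone(e₁,e₂)` and
`σ₂ = cone(e₃,e₄)`: `S₁` maps each `σᵢ` into `τ = cone(e₁,e₂,e₃) ⊆ ℝ³` (so it
is a map of fans to the fan of faces of `τ`), the images of `e₁, …, e₄`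
generate `τ` as a cone, but `S₁(σ₁) ∪ S₁(σ₂) ≠ τ`. -/
theorem map_of_fans_image_generates_but_not_surjective :
    S₁ '' cone2 ![1, 0, 0, 0] ![0, 1, 0, 0] ⊆ cone3 ![1, 0, 0] ![0, 1, 0] ![0, 0, 1] ∧
    S₁ '' cone2 ![0, 0, 1, 0] ![0, 0, 0, 1] ⊆ cone3 ![1, 0, 0] ![0, 1, 0] ![0, 0, 1] ∧
    cone3 ![1, 0, 0] ![0, 1, 0] ![0, 0, 1] =
      cone4 (S₁ ![1, 0, 0, 0]) (S₁ ![0, 1, 0, 0]) (S₁ ![0, 0, 1, 0]) (S₁ ![0, 0, 0, 1]) ∧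
    S₁ '' cone2 ![1, 0, 0, 0] ![0, 1, 0, 0] ∪ S₁ '' cone2 ![0, 0, 1, 0] ![0, 0, 0, 1]
      ≠ cone3 ![1, 0, 0] ![0, 1, 0] ![0, 0, 1] := by
  have h1 : S₁ '' cone2 ![1, 0, 0, 0] ![0, 1, 0, 0] ⊆
      cone3 ![1, 0, 0] ![0, 1, 0] ![0, 0, 1] := by
    rintro x ⟨v, ⟨s, t, hs, ht, rfl⟩, rfl⟩
    refine ⟨s, t, 0, hs, ht, le_refl 0, ?_⟩
    rw [hS]
    funext i; fin_cases i <;> simp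
  have h2 : S₁ '' cone2 ![0, 0, 1, 0] ![0, 0, 0, 1] ⊆
      cone3 ![1, 0, 0] ![0, 1, 0] ![0, 0, 1] := by
    rintro x ⟨v, ⟨s, t, hs, ht, rfl⟩, rfl⟩
    refine ⟨t, t, s, ht, ht, hs, ?_⟩
    rw [hS]
    funext i; fin_cases i <;> simp
  refine ⟨h1, h2, ?_, ?_⟩
  · ext x
    constructor
    · rintro ⟨s, t, p, hs, ht, hp, rfl⟩
      refine ⟨s, t, p, 0, hs, ht, hp, le_refl 0, ?_⟩
      rw [hS, hS, hS, hS]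
      funext i; fin_cases i <;> simp
    · rintro ⟨s, t, p, q, hs, ht, hp, hq, rfl⟩
      refine ⟨s + q, t + q, p, by linarith, by linarith, hp, ?_⟩
      rw [hS, hS, hS, hS]
      funext i; fin_cases i <;> (simp; try ring)
  · intro h
    have hx : (![1, 0, 1] : Fin 3 → ℝ) ∈ cone3 ![1, 0, 0] ![0, 1, 0] ![0, 0, 1] := by
      refine ⟨1, 0, 1, zero_le_one, le_refl 0, zero_le_one, ?_⟩
      funext i; fin_cases i <;> simp
    rw [← h] at hx
    rcases hx with hx | hx
    · obtain ⟨v, ⟨s, t, hs, ht, rfl⟩, hx⟩ := hx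
      rw [hS] at hx
      have h2 := congrFun hx 2
      simp at h2
    · obtain ⟨v, ⟨s, t, hs, ht, rfl⟩, hx⟩ := hx
      rw [hS] at hx
      have h0 := congrFun hx 0
      have h1 := congrFun hx 1
      simp at h0 h1
      rw [h0] at h1
      exact one_ne_zero h1
end
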